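/- arXiv:math/0308048 — 5 statements merged into one kernel-verified Lean document; each statement's English description precedes it below -/
import Mathlib

section
/- Let x and y be unit quaternions in ℍ (so ‖x‖ = ‖y‖ = 1) that are linearly independent over ℝ. Then there exist pure unit quaternions p and q such that the set of unit vectors in the real 2-plane spanned by x and y (the great circle of S³ through x and y) equals the left p-fiber through y, {(l + m·p)·y : l, m ∈ ℝ, l² + m² = 1}, and also equals the right q-fiber through y, {y·(l + m·q) : l, m ∈ ℝ, l² + m² = 1}. (Every geodesic in S³ is a left fiber and a right fiber.) -/
open Quaternion

lemma norm_lm (p : ℍ[ℝ]) (hp : p.re = 0) (hp1 : ‖p‖ = 1) (l m : ℝ) :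
    ‖((l : ℍ[ℝ]) + (m : ℍ[ℝ]) * p)‖ ^ 2 = l ^ 2 + m ^ 2 := by
  have h1 : p.imI ^ 2 + p.imJ ^ 2 + p.imK ^ 2 = 1 := by
    have h := Quaternion.normSq_eq_norm_mul_self p
    rw [Quaternion.normSq_def', hp, hp1] at h
    nlinarith
  have h := Quaternion.normSq_eq_norm_mul_self ((l : ℍ[ℝ]) + (m : ℍ[ℝ]) * p)
  rw [Quaternion.normSq_def'] at h
  simp [Quaternion.re_add, Quaternion.imI_add, Quaternion.imJ_add, Quaternion.imK_add,
    Quaternion.re_mul, Quaternion.imI_mul, Quaternion.imJ_mul, Quaternion.imK_mul, hp] at h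
  nlinarith [h, h1]

/-- Generic lemma for the left fiber version. -/
lemma left_fiber_key (w y : ℍ[ℝ]) (hw : ‖w‖ = 1) (hy : ‖y‖ = 1) (hwi : w.im ≠ 0) :
    ∃ p : ℍ[ℝ], p.re = 0 ∧ ‖p‖ = 1 ∧
      {z : ℍ[ℝ] | ‖z‖ = 1 ∧ z ∈ Submodule.span ℝ ({w * y, y} : Set ℍ[ℝ])} =
        {z : ℍ[ℝ] | ∃ l m : ℝ, l ^ 2 + m ^ 2 = 1 ∧
          z = ((l : ℍ[ℝ]) + (m : ℍ[ℝ]) * p) * y} := by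
  set s : ℝ := ‖w.im‖ with hs
  have hs0 : s ≠ 0 := norm_ne_zero_iff.mpr hwi
  have hspos : 0 < s := norm_pos_iff.mpr hwi
  refine ⟨s⁻¹ • w.im, ?_, ?_, ?_⟩
  · simp [Quaternion.re_smul]
  · rw [norm_smul, Real.norm_eq_abs, abs_of_pos (inv_pos.mpr hspos), ← hs]; field_simp
  · set p : ℍ[ℝ] := s⁻¹ • w.im with hpdef
    have hpre : p.re = 0 := by simp [hpdef, Quaternion.re_smul]
    have hpn : ‖p‖ = 1 := by rw [hpdef, norm_smul, Real.norm_eq_abs, abs_of_pos (inv_pos.mpr hspos), ← hs]; field_simp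
    have key : ∀ a b : ℝ, a • w + (b : ℍ[ℝ]) = ((a * w.re + b : ℝ) : ℍ[ℝ]) + ((a * s : ℝ) : ℍ[ℝ]) * p := by
      intro a b
      rw [hpdef]
      rw [Quaternion.coe_mul_eq_smul, smul_smul]
      have : (a * s) * s⁻¹ = a := by field_simp
      rw [this]
      push_cast
      calc a • w + (b : ℍ[ℝ]) = a • (↑w.re + w.im) + (b:ℍ[ℝ]) := by rw [Quaternion.re_add_im]
        _ = _ := by
            rw [smul_add]
            rw [← Quaternion.coe_mul_eq_smul a (↑w.re)]
            push_cast
            rw [add_right_comm]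
    ext z
    simp only [Set.mem_setOf_eq]
    constructor
    · rintro ⟨hz, hzm⟩
      obtain ⟨a, b, hab⟩ := Submodule.mem_span_pair.mp hzm
      refine ⟨a * w.re + b, a * s, ?_, ?_⟩
      · have hz2 : z = (((a * w.re + b : ℝ) : ℍ[ℝ]) + ((a * s : ℝ) : ℍ[ℝ]) * p) * y := by
          rw [← hab, ← key a b]
          rw [add_mul, Quaternion.coe_mul_eq_smul, smul_mul_assoc]
        have := norm_lm p hpre hpn (a * w.re + b) (a * s)
        rw [← this]
        have : ‖(((a * w.re + b : ℝ) : ℍ[ℝ]) + ((a * s : ℝ) : ℍ[ℝ]) * p)‖ = 1 := by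
          have h3 : ‖z‖ = ‖(((a * w.re + b : ℝ) : ℍ[ℝ]) + ((a * s : ℝ) : ℍ[ℝ]) * p)‖ * ‖y‖ := by
            rw [hz2, norm_mul]
          rw [hy, mul_one] at h3
          rw [← h3, hz]
        rw [this]; norm_num
      · rw [← hab, ← key a b, add_mul, Quaternion.coe_mul_eq_smul, smul_mul_assoc]
    · rintro ⟨l, m, hlm, hz⟩
      constructor
      · rw [hz, norm_mul, hy, mul_one]
        have := norm_lm p hpre hpn l m
        rw [hlm] at this
        nlinarith [norm_nonneg ((l : ℍ[ℝ]) + (m : ℍ[ℝ]) * p)]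
      · refine Submodule.mem_span_pair.mpr ⟨m / s, l - (m / s) * w.re, ?_⟩
        have := key (m / s) (l - (m / s) * w.re)
        have h4 : (m / s) * w.re + (l - (m / s) * w.re) = l := by ring
        have h5 : (m / s) * s = m := by field_simp
        rw [h4, h5] at this
        rw [hz, ← this, add_mul, Quaternion.coe_mul_eq_smul, smul_mul_assoc]

/-- Generic lemma for the right fiber version. -/
lemma right_fiber_key (v y : ℍ[ℝ]) (hy : ‖y‖ = 1) (hvi : v.im ≠ 0) :
    ∃ q : ℍ[ℝ], q.re = 0 ∧ ‖q‖ = 1 ∧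
      {z : ℍ[ℝ] | ‖z‖ = 1 ∧ z ∈ Submodule.span ℝ ({y * v, y} : Set ℍ[ℝ])} =
        {z : ℍ[ℝ] | ∃ l m : ℝ, l ^ 2 + m ^ 2 = 1 ∧
          z = y * ((l : ℍ[ℝ]) + (m : ℍ[ℝ]) * q)} := by
  set s : ℝ := ‖v.im‖ with hs
  have hs0 : s ≠ 0 := norm_ne_zero_iff.mpr hvi
  have hspos : 0 < s := norm_pos_iff.mpr hvi
  refine ⟨s⁻¹ • v.im, ?_, ?_, ?_⟩
  · simp [Quaternion.re_smul]
  · rw [norm_smul, Real.norm_eq_abs, abs_of_pos (inv_pos.mpr hspos), ← hs]; field_simp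
  · set p : ℍ[ℝ] := s⁻¹ • v.im with hpdef
    have hpre : p.re = 0 := by simp [hpdef, Quaternion.re_smul]
    have hpn : ‖p‖ = 1 := by
      rw [hpdef, norm_smul, Real.norm_eq_abs, abs_of_pos (inv_pos.mpr hspos), ← hs]; field_simp
    have key : ∀ a b : ℝ, a • v + (b : ℍ[ℝ]) = ((a * v.re + b : ℝ) : ℍ[ℝ]) + ((a * s : ℝ) : ℍ[ℝ]) * p := by
      intro a b
      rw [hpdef]
      rw [Quaternion.coe_mul_eq_smul, smul_smul]
      have : (a * s) * s⁻¹ = a := by field_simp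
      rw [this]
      push_cast
      calc a • v + (b : ℍ[ℝ]) = a • (↑v.re + v.im) + (b:ℍ[ℝ]) := by rw [Quaternion.re_add_im]
        _ = _ := by
            rw [smul_add]
            rw [← Quaternion.coe_mul_eq_smul a (↑v.re)]
            rw [add_right_comm]
    ext z
    simp only [Set.mem_setOf_eq]
    constructor
    · rintro ⟨hz, hzm⟩
      obtain ⟨a, b, hab⟩ := Submodule.mem_span_pair.mp hzm
      have hz2 : z = y * (((a * v.re + b : ℝ) : ℍ[ℝ]) + ((a * s : ℝ) : ℍ[ℝ]) * p) := by
        rw [← hab, ← key a b, mul_add, mul_smul_comm, Quaternion.mul_coe_eq_smul]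
      refine ⟨a * v.re + b, a * s, ?_, hz2⟩
      have hnl := norm_lm p hpre hpn (a * v.re + b) (a * s)
      rw [← hnl]
      have h3 : ‖z‖ = ‖y‖ * ‖(((a * v.re + b : ℝ) : ℍ[ℝ]) + ((a * s : ℝ) : ℍ[ℝ]) * p)‖ := by
        rw [hz2, norm_mul]
      rw [hy, one_mul, hz] at h3
      rw [← h3]; norm_num
    · rintro ⟨l, m, hlm, hz⟩
      constructor
      · rw [hz, norm_mul, hy, one_mul]
        have := norm_lm p hpre hpn l m
        rw [hlm] at this
        nlinarith [norm_nonneg ((l : ℍ[ℝ]) + (m : ℍ[ℝ]) * p)]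
      · refine Submodule.mem_span_pair.mpr ⟨m / s, l - (m / s) * v.re, ?_⟩
        have := key (m / s) (l - (m / s) * v.re)
        have h4 : (m / s) * v.re + (l - (m / s) * v.re) = l := by ring
        have h5 : (m / s) * s = m := by field_simp
        rw [h4, h5] at this
        rw [hz, ← this, mul_add, mul_smul_comm, Quaternion.mul_coe_eq_smul]

/-- Every geodesic (great circle) in the unit 3-sphere of the quaternions is both a
left fiber and a right fiber: if `x` and `y` are linearly independent unit quaternions,
then there are pure unit quaternions `p` and `q` such that the set of unit vectors of
the real 2-plane spanned by `x` and `y` equals the left `p`-fiber through `y` and also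
equals the right `q`-fiber through `y`. -/
theorem great_circle_is_left_and_right_fiber
    (x y : ℍ[ℝ]) (hx : ‖x‖ = 1) (hy : ‖y‖ = 1)
    (hli : LinearIndependent ℝ ![x, y]) :
    ∃ p q : ℍ[ℝ], p.re = 0 ∧ ‖p‖ = 1 ∧ q.re = 0 ∧ ‖q‖ = 1 ∧
      {z : ℍ[ℝ] | ‖z‖ = 1 ∧ z ∈ Submodule.span ℝ ({x, y} : Set ℍ[ℝ])} =
        {z : ℍ[ℝ] | ∃ l m : ℝ, l ^ 2 + m ^ 2 = 1 ∧
          z = ((l : ℍ[ℝ]) + (m : ℍ[ℝ]) * p) * y} ∧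
      {z : ℍ[ℝ] | ‖z‖ = 1 ∧ z ∈ Submodule.span ℝ ({x, y} : Set ℍ[ℝ])} =
        {z : ℍ[ℝ] | ∃ l m : ℝ, l ^ 2 + m ^ 2 = 1 ∧
          z = y * ((l : ℍ[ℝ]) + (m : ℍ[ℝ]) * q)} := by
  have hy0 : y ≠ 0 := by intro h; rw [h, norm_zero] at hy; norm_num at hy
  have hind := (linearIndependent_fin2.mp hli).2
  simp only [Matrix.cons_val_one, Matrix.head_cons, Matrix.cons_val_zero] at hind
  set w : ℍ[ℝ] := x * y⁻¹ with hwdef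
  set v : ℍ[ℝ] := y⁻¹ * x with hvdef
  have hwy : w * y = x := by rw [hwdef, mul_assoc, inv_mul_cancel₀ hy0, mul_one]
  have hyv : y * v = x := by rw [hvdef, ← mul_assoc, mul_inv_cancel₀ hy0, one_mul]
  have hnw : ‖w‖ = 1 := by rw [hwdef, norm_mul, norm_inv, hx, hy]; norm_num
  have hwim : w.im ≠ 0 := by
    intro h
    have : w = ((w.re : ℝ) : ℍ[ℝ]) := by rw [← Quaternion.re_add_im w, h, add_zero]; simp
    apply hind w.re
    rw [← hwy, this, Quaternion.coe_mul_eq_smul, Quaternion.re_coe]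
  have hvim : v.im ≠ 0 := by
    intro h
    have : v = ((v.re : ℝ) : ℍ[ℝ]) := by rw [← Quaternion.re_add_im v, h, add_zero]; simp
    apply hind v.re
    rw [← hyv, this, Quaternion.mul_coe_eq_smul, Quaternion.re_coe]
  obtain ⟨p, hp1, hp2, hp3⟩ := left_fiber_key w y hnw hy hwim
  obtain ⟨q, hq1, hq2, hq3⟩ := right_fiber_key v y hy hvim
  rw [hwy] at hp3
  rw [hyv] at hq3
  exact ⟨p, q, hp1, hp2, hq1, hq2, hp3, hq3⟩
end

section
/- For every pair of pure unit quaternions p and q, there exists a unit quaternion x such that the left p-fiber through x equals the right q-fiber through x, i.e., {(l + m·p)·x : l, m ∈ ℝ, l² + m² = 1} = {x·(l + m·q) : l, m ∈ ℝ, l² + m² = 1}. (For every pair p, q of pure unit quaternions there is a geodesic in S³ that is simultaneously a left p-fiber and a right q-fiber.) -/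
/-!
Both fibers through `x` coincide as soon as `p * x = x * q`. Since `p² = q² = -1`, every
`y - p * y * q` is such an intertwiner, and one of them is nonzero: otherwise `y ↦ p * y * q`
would be the identity, whose trace is `4`, while its trace is `4 * p.re * q.re = 0`.
Normalizing a nonzero intertwiner gives the unit quaternion `x`.
-/

open Quaternion

theorem mul_sub_mul_mul_eq {R : Type*} [Ring R] {p q : R} (hp : p * p = -1) (hq : q * q = -1)
    (y : R) : p * (y - p * y * q) = (y - p * y * q) * q := by
  simp only [mul_sub, sub_mul, ← mul_assoc, hp]
  simp only [mul_assoc, hq]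
  noncomm_ring

namespace Quaternion

theorem mul_self_eq_neg_one {p : ℍ[ℝ]} (hre : p.re = 0) (hnorm : ‖p‖ = 1) : p * p = -1 := by
  have h := sq_eq_neg_normSq.mpr hre
  rwa [sq, normSq_eq_norm_mul_self, hnorm, mul_one, coe_one] at h

theorem exists_sub_mul_mul_ne_zero {R : Type*} [CommRing R] [CharZero R] {p q : ℍ[R]}
    (hp : p.re = 0) (hq : q.re = 0) : ∃ y : ℍ[R], y - p * y * q ≠ 0 := by
  by_contra! h
  have hre y := congrArg QuaternionAlgebra.re (h y)
  have hi y := congrArg QuaternionAlgebra.imI (h y)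
  have hj y := congrArg QuaternionAlgebra.imJ (h y)
  have hk y := congrArg QuaternionAlgebra.imK (h y)
  simp only [re_sub, imI_sub, imJ_sub, imK_sub, re_mul, imI_mul, imJ_mul, imK_mul, hp, hq,
    re_zero, imI_zero, imJ_zero, imK_zero] at hre hi hj hk
  have h₁ := hre 1
  simp only [re_one, imI_one, imJ_one, imK_one] at h₁
  have trace_eq_zero : (4 : R) = 0 := by
    linear_combination h₁ + hi ⟨0, 1, 0, 0⟩ + hj ⟨0, 0, 1, 0⟩ + hk ⟨0, 0, 0, 1⟩
  norm_num at trace_eq_zero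

theorem exists_norm_eq_one_mul_eq_mul {p q : ℍ[ℝ]} (hpre : p.re = 0) (hpnorm : ‖p‖ = 1)
    (hqre : q.re = 0) (hqnorm : ‖q‖ = 1) : ∃ x : ℍ[ℝ], ‖x‖ = 1 ∧ p * x = x * q := by
  obtain ⟨y, hy⟩ := exists_sub_mul_mul_ne_zero hpre hqre
  refine ⟨‖y - p * y * q‖⁻¹ • (y - p * y * q), norm_smul_inv_norm hy, ?_⟩
  rw [mul_smul_comm, smul_mul_assoc,
    mul_sub_mul_mul_eq (mul_self_eq_neg_one hpre hpnorm) (mul_self_eq_neg_one hqre hqnorm)]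

theorem add_mul_mul_eq_mul_add_mul {R : Type*} [CommRing R] {p q x : ℍ[R]}
    (h : p * x = x * q) (l m : R) : (l + m * p) * x = x * (l + m * q) := by
  rw [add_mul, mul_add, coe_commutes, mul_assoc, h, ← mul_assoc, coe_commutes, mul_assoc]

end Quaternion

/-- For every pair `p`, `q` of pure unit quaternions there is a geodesic of the unit
3-sphere that is simultaneously a left `p`-fiber and a right `q`-fiber: there is a unit
quaternion `x` such that the left `p`-fiber through `x` equals the right `q`-fiber
through `x`. -/
theorem exists_geodesic_left_p_fiber_eq_right_q_fiber
    (p q : ℍ[ℝ]) (hpre : p.re = 0) (hpnorm : ‖p‖ = 1)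
    (hqre : q.re = 0) (hqnorm : ‖q‖ = 1) :
    ∃ x : ℍ[ℝ], ‖x‖ = 1 ∧
      {z : ℍ[ℝ] | ∃ l m : ℝ, l ^ 2 + m ^ 2 = 1 ∧
        z = ((l : ℍ[ℝ]) + (m : ℍ[ℝ]) * p) * x} =
      {z : ℍ[ℝ] | ∃ l m : ℝ, l ^ 2 + m ^ 2 = 1 ∧
        z = x * ((l : ℍ[ℝ]) + (m : ℍ[ℝ]) * q)} := by
  obtain ⟨x, hx, hpx⟩ := exists_norm_eq_one_mul_eq_mul hpre hpnorm hqre hqnorm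
  exact ⟨x, hx, by simp only [add_mul_mul_eq_mul_add_mul hpx]⟩
end

section
/- Let p and q be pure unit quaternions and y a unit quaternion. Then for all l, m ∈ ℝ with l² + m² = 1, ‖(y·(l + m·q))⁻¹ · p · (y·(l + m·q)) − q‖ = ‖y⁻¹·p·y − q‖. (The image of the right q-fiber through y — a great circle of S³ — under the Hopf projection x ↦ x⁻¹·p·x lies at a constant distance from the point q on the 2-sphere of pure unit quaternions; hence the image of a geodesic of S³ under the projection of a bundle of great-circle fibers is either a round circle or a point.) -/
open Quaternion

/-- The image of the right `q`-fiber through `y` under the Hopf projection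
`x ↦ x⁻¹ * p * x` lies at constant distance from the point `q` of the 2-sphere of pure
unit quaternions; hence the image of a geodesic of `S³` under the projection of a great
circle fibration is a round circle or a point. -/
theorem hopf_image_of_right_fiber_constant_distance
    (p q y : ℍ[ℝ]) (hpre : p.re = 0) (hpnorm : ‖p‖ = 1)
    (hqre : q.re = 0) (hqnorm : ‖q‖ = 1) (hy : ‖y‖ = 1)
    (l m : ℝ) (hlm : l ^ 2 + m ^ 2 = 1) :
    ‖(y * ((l : ℍ[ℝ]) + (m : ℍ[ℝ]) * q))⁻¹ * p * (y * ((l : ℍ[ℝ]) + (m : ℍ[ℝ]) * q)) - q‖ =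
      ‖y⁻¹ * p * y - q‖ := by
  set z : ℍ[ℝ] := (l : ℍ[ℝ]) + (m : ℍ[ℝ]) * q with hzdef
  have hqsq : Quaternion.normSq q = 1 := by
    rw [Quaternion.normSq_eq_norm_mul_self, hqnorm]; ring
  have hqc : q.imI ^ 2 + q.imJ ^ 2 + q.imK ^ 2 = 1 := by
    have := hqsq
    rw [Quaternion.normSq_def'] at this
    nlinarith [this, hqre]
  have h3 : Quaternion.normSq z = 1 := by
    rw [Quaternion.normSq_def']
    simp [hzdef, hqre]
    nlinarith [hqc, hlm]
  have hznorm : ‖z‖ = 1 := by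
    have h := Quaternion.normSq_eq_norm_mul_self z
    rw [h3] at h
    nlinarith [norm_nonneg z, h]
  have hzne : z ≠ 0 := by
    intro h; rw [h] at hznorm; simp at hznorm
  have hyne : y ≠ 0 := by
    intro h; rw [h] at hy; simp at hy
  have hcomm : z * q = q * z := by
    rw [hzdef, add_mul, mul_add, Quaternion.coe_commutes l q, mul_assoc,
      ← mul_assoc q, ← Quaternion.coe_commutes m q, mul_assoc]
  have hconj : z⁻¹ * q * z = q := by
    rw [mul_assoc, ← hcomm, ← mul_assoc, inv_mul_cancel₀ hzne, one_mul]
  have key : (y * z)⁻¹ * p * (y * z) - q = z⁻¹ * ((y⁻¹ * p * y - q) * z) := by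
    rw [mul_inv_rev]
    have : z⁻¹ * ((y⁻¹ * p * y - q) * z)
        = z⁻¹ * y⁻¹ * p * (y * z) - z⁻¹ * q * z := by
      rw [sub_mul, mul_sub]
      congr 1 <;> noncomm_ring
    rw [this, hconj]
  rw [key, norm_mul, norm_mul, norm_inv, hznorm]
  norm_num
end

section
/- Let q be an odd positive integer, let p be an integer coprime to q, and set ζ = exp(2πi/q) ∈ ℂ. For 0 ≤ n < q define Cₙ = {(r·ζⁿ, s·ζ^{pn}) : r, s ∈ ℝ, r² + s² = 1} ⊆ ℂ × ℂ. Then for all 0 ≤ n < m < q, the sets Cₙ and Cₘ are disjoint. (The components of the great circle link D_{p/q} are pairwise disjoint.) -/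
lemma zpow_real_dvd (q : ℕ) (hq : 0 < q) (hodd : Odd q) (ζ : ℂ)
    (hprim : IsPrimitiveRoot ζ q) (k : ℤ) (c : ℝ) (hk : ζ ^ k = (c : ℂ)) :
    (q : ℤ) ∣ k := by
  have hq1 : (ζ ^ k) ^ (q : ℕ) = 1 := by
    rw [← zpow_natCast, ← zpow_mul, mul_comm, zpow_mul, zpow_natCast, hprim.pow_eq_one,
      one_zpow]
  have hc : (c : ℂ) ^ q = 1 := by rw [← hk]; exact hq1
  have hcr : c ^ q = 1 := by exact_mod_cast hc
  have hc1 : c = 1 := by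
    have := hodd.strictMono_pow (R := ℝ) |>.injective
    have h1 : (1 : ℝ) ^ q = 1 := one_pow q
    exact this (show c ^ q = 1 ^ q by rw [hcr, one_pow])
  rw [← hprim.zpow_eq_one_iff_dvd]
  rw [hk, hc1, Complex.ofReal_one]

/-- The components of the great circle link `D_{p/q}` are pairwise disjoint: for `q` odd,
`p` coprime to `q` and `ζ = exp(2πi/q)`, the great circles
`Cₙ = {(r ζⁿ, s ζ^{pn}) : r² + s² = 1}` for `0 ≤ n < q` are pairwise disjoint. -/
theorem dihedral_link_components_disjoint
    (q : ℕ) (hq : 0 < q) (hodd : Odd q) (p : ℤ) (hcop : Int.gcd p q = 1)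
    (ζ : ℂ) (hζ : ζ = Complex.exp (2 * Real.pi * Complex.I / q))
    (C : ℕ → Set (ℂ × ℂ))
    (hC : ∀ n, C n = {x : ℂ × ℂ | ∃ r s : ℝ, r ^ 2 + s ^ 2 = 1 ∧
      x = ((r : ℂ) * ζ ^ n, (s : ℂ) * ζ ^ (p * (n : ℤ)))}) :
    ∀ n m : ℕ, n < m → m < q → Disjoint (C n) (C m) := by
  have hprim : IsPrimitiveRoot ζ q := by
    rw [hζ]; exact Complex.isPrimitiveRoot_exp q hq.ne'
  have hζne : ζ ≠ 0 := hprim.ne_zero hq.ne'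
  intro n m hnm hmq
  rw [Set.disjoint_left]
  rintro ⟨x1, x2⟩ hxn hxm
  rw [hC n] at hxn
  rw [hC m] at hxm
  obtain ⟨r, s, hrs, hx⟩ := hxn
  obtain ⟨r', s', hrs', hx'⟩ := hxm
  have h1 : (r : ℂ) * ζ ^ n = (r' : ℂ) * ζ ^ m := by
    have := hx.symm.trans hx'
    exact congrArg Prod.fst this
  have h2 : (s : ℂ) * ζ ^ (p * (n : ℤ)) = (s' : ℂ) * ζ ^ (p * (m : ℤ)) := by
    have := hx.symm.trans hx'
    exact congrArg Prod.snd this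
  -- key: m - n not divisible by q
  have hknd : ¬ (q : ℤ) ∣ ((m : ℤ) - n) := by
    intro hdvd
    have h0 : (0 : ℤ) < (m : ℤ) - n := by
      have := hnm; omega
    have hlt : (m : ℤ) - n < q := by omega
    obtain ⟨c, hc⟩ := hdvd
    have : 0 < c := by nlinarith
    nlinarith
  by_cases hr : r = 0
  · -- then r' = 0, and s, s' nonzero
    have hr' : r' = 0 := by
      have : (r' : ℂ) * ζ ^ m = 0 := by rw [← h1, hr]; simp
      rcases mul_eq_zero.1 this with h | h
      · exact_mod_cast h
      · exact absurd h (pow_ne_zero _ hζne)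
    have hs2 : s ^ 2 = 1 := by rw [hr] at hrs; linarith
    have hs'2 : s' ^ 2 = 1 := by rw [hr'] at hrs'; linarith
    have hs : s ≠ 0 := by intro h; rw [h] at hs2; norm_num at hs2
    have hs' : s' ≠ 0 := by intro h; rw [h] at hs'2; norm_num at hs'2
    have hζk : ζ ^ (p * (m : ℤ) - p * (n : ℤ)) = ((s / s' : ℝ) : ℂ) := by
      have hs'c : (s' : ℂ) ≠ 0 := by exact_mod_cast hs'
      push_cast
      rw [zpow_sub₀ hζne, div_eq_div_iff (zpow_ne_zero _ hζne) hs'c]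
      linear_combination -h2
    have hdvd : (q : ℤ) ∣ (p * (m : ℤ) - p * (n : ℤ)) :=
      zpow_real_dvd q hq hodd ζ hprim _ _ hζk
    rw [← mul_sub] at hdvd
    have : (q : ℤ) ∣ ((m : ℤ) - n) := by
      have hcop' : IsCoprime (q : ℤ) p := by
        rw [Int.isCoprime_iff_gcd_eq_one, Int.gcd_comm]; exact hcop
      exact hcop'.dvd_of_dvd_mul_left hdvd
    exact hknd this
  · have hr' : r' ≠ 0 := by
      intro h
      apply hr
      have : (r : ℂ) * ζ ^ n = 0 := by rw [h1, h]; simp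
      rcases mul_eq_zero.1 this with h' | h'
      · exact_mod_cast h'
      · exact absurd h' (pow_ne_zero _ hζne)
    have hζk : ζ ^ ((m : ℤ) - (n : ℤ)) = ((r / r' : ℝ) : ℂ) := by
      have hr'c : (r' : ℂ) ≠ 0 := by exact_mod_cast hr'
      push_cast
      rw [zpow_sub₀ hζne, zpow_natCast, zpow_natCast,
        div_eq_div_iff (pow_ne_zero _ hζne) hr'c]
      linear_combination -h1
    exact hknd (zpow_real_dvd q hq hodd ζ hprim _ _ hζk)
end

section
/- Let α, β ∈ ℝ and c, c' ∈ [0, 1]. The z-disk Dz(α, c) and the w-disk Dw(β, c') have nonempty intersection if and only if c² + c'² ≥ 1. (A z-disk of radius c and a w-disk of radius c' intersect only when c² + c'² ≥ 1.) -/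
/-- The z-disk of radius `c` centered at angle `θ` in the unit 3-sphere
`S³ = {(z,w) ∈ ℂ² : |z|² + |w|² = 1}`. -/
def Dz (θ c : ℝ) : Set (ℂ × ℂ) :=
  {x : ℂ × ℂ | ‖x.1‖ ^ 2 + ‖x.2‖ ^ 2 = 1 ∧ ‖x.2‖ ≤ c ∧
    ∃ r : ℝ, 0 ≤ r ∧ x.1 = (r : ℂ) * Complex.exp (θ * Complex.I)}

/-- The w-disk of radius `c` centered at angle `θ` in the unit 3-sphere. -/
def Dw (θ c : ℝ) : Set (ℂ × ℂ) :=
  {x : ℂ × ℂ | ‖x.1‖ ^ 2 + ‖x.2‖ ^ 2 = 1 ∧ ‖x.1‖ ≤ c ∧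
    ∃ s : ℝ, 0 ≤ s ∧ x.2 = (s : ℂ) * Complex.exp (θ * Complex.I)}

/-! A point `(z, w)` of S³ lying in both disks has `|z| ≤ c'` and `|w| ≤ c`, so
`1 = |z|² + |w|² ≤ c'² + c²`. Conversely, if `c² + c'² ≥ 1`, the point
`(√(1 - c²) e^{iα}, c e^{iβ})` lies in both disks. -/

open Complex

lemma norm_ofReal_mul_exp_mul_I {r : ℝ} (hr : 0 ≤ r) (θ : ℝ) :
    ‖(r : ℂ) * exp (θ * I)‖ = r := by
  rw [norm_mul, norm_exp_ofReal_mul_I, mul_one, Complex.norm_of_nonneg hr]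

section PolarPoint

variable {α β r s c : ℝ}

lemma ofReal_mul_exp_mem_Dz (hr : 0 ≤ r) (hs : 0 ≤ s) (hrs : r ^ 2 + s ^ 2 = 1) (hsc : s ≤ c) :
    ((r : ℂ) * exp (α * I), (s : ℂ) * exp (β * I)) ∈ Dz α c := by
  simp only [Dz, Set.mem_ofPred_eq, norm_ofReal_mul_exp_mul_I hr, norm_ofReal_mul_exp_mul_I hs]
  exact ⟨hrs, hsc, r, hr, rfl⟩

lemma ofReal_mul_exp_mem_Dw (hr : 0 ≤ r) (hs : 0 ≤ s) (hrs : r ^ 2 + s ^ 2 = 1) (hrc : r ≤ c) :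
    ((r : ℂ) * exp (α * I), (s : ℂ) * exp (β * I)) ∈ Dw β c := by
  simp only [Dw, Set.mem_ofPred_eq, norm_ofReal_mul_exp_mul_I hr, norm_ofReal_mul_exp_mul_I hs]
  exact ⟨hrs, hrc, s, hs, rfl⟩

end PolarPoint

lemma one_le_sq_add_sq_of_mem_Dz_inter_Dw {α β c c' : ℝ} {x : ℂ × ℂ}
    (hx : x ∈ Dz α c ∩ Dw β c') : 1 ≤ c ^ 2 + c' ^ 2 := by
  obtain ⟨⟨hsphere, hwc, -⟩, -, hzc', -⟩ := hx
  calc 1 = ‖x.1‖ ^ 2 + ‖x.2‖ ^ 2 := hsphere.symm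
    _ ≤ c' ^ 2 + c ^ 2 := by gcongr
    _ = c ^ 2 + c' ^ 2 := add_comm _ _

/-- A z-disk of radius `c` and a w-disk of radius `c'` intersect if and only if
`c² + c'² ≥ 1`. -/
theorem zdisk_wdisk_intersect_iff
    (α β : ℝ) (c c' : ℝ) (hc : c ∈ Set.Icc (0 : ℝ) 1) (hc' : c' ∈ Set.Icc (0 : ℝ) 1) :
    (Dz α c ∩ Dw β c').Nonempty ↔ 1 ≤ c ^ 2 + c' ^ 2 := by
  refine ⟨fun ⟨_, hx⟩ => one_le_sq_add_sq_of_mem_Dz_inter_Dw hx, fun h => ?_⟩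
  have hsq : √(1 - c ^ 2) ^ 2 = 1 - c ^ 2 := Real.sq_sqrt (by nlinarith [hc.1, hc.2])
  have hsphere : √(1 - c ^ 2) ^ 2 + c ^ 2 = 1 := by rw [hsq]; ring
  have hle : √(1 - c ^ 2) ≤ c' := (Real.sqrt_le_left hc'.1).2 (by linarith)
  exact ⟨_, ofReal_mul_exp_mem_Dz (Real.sqrt_nonneg _) hc.1 hsphere le_rfl,
    ofReal_mul_exp_mem_Dw (Real.sqrt_nonneg _) hc.1 hsphere hle⟩
end
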